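/- arXiv:2109.06066 — 4 statements merged into one kernel-verified Lean document; each statement's English description precedes it below -/
import Mathlib

section
/- Let f(q₂,q₃,q₄) = cos(q₂) + cos(q₃) + cos(q₄) + cos(q₂+q₃) + cos(q₃+q₄) on 𝕋³. Then the set of critical points of f consists exactly of: the four isolated points (0,0,0), (0,0,π), (π,0,0), (π,0,π), and the two one-parameter families P₁(ϑ) = (ϑ, π, ϑ-π) and P₂(ϑ) = (ϑ, π, -ϑ), ϑ ∈ 𝕋. -/
/-!
For the classes `a, b, c ∈ ℝ/2πℤ` of `q₂, q₃, q₄`, the critical-point equations `∂f = 0` read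
`sin a + sin (a + b) = 0`, `sin b + sin (a + b) + sin (b + c) = 0`, `sin c + sin (b + c) = 0`.
Since `sin θ + sin ψ = 0` means `ψ = -θ` or `ψ = θ - π`, the outer two equations force either
`b = π`, where they hold identically and the middle one reduces to `sin a + sin c = 0`, giving the
two families; or `b = -2a = -2c`, where the middle one forces `sin a = 0`, giving the four
isolated points.
-/

open Real

/-- Equality of angles on the circle `ℝ/2πℤ`. -/
def AngleEq (x y : ℝ) : Prop := ∃ k : ℤ, x = y + 2 * π * k

theorem angleEq_iff_coe_eq {x y : ℝ} : AngleEq x y ↔ (x : Angle) = y := by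
  rw [Angle.angle_eq_iff_two_pi_dvd_sub]
  exact exists_congr fun _ ↦ sub_eq_iff_eq_add'.symm

noncomputable def zigzagPotential (q₂ q₃ q₄ : ℝ) : ℝ :=
  cos q₂ + cos q₃ + cos q₄ + cos (q₂ + q₃) + cos (q₃ + q₄)

section Derivatives

variable (q₂ q₃ q₄ : ℝ)

theorem hasDerivAt_zigzagPotential_fst :
    HasDerivAt (fun x ↦ zigzagPotential x q₃ q₄) (-(sin q₂ + sin (q₂ + q₃))) q₂ :=
  (((((hasDerivAt_id q₂).cos.add_const (cos q₃)).add_const (cos q₄)).add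
    ((hasDerivAt_id q₂).add_const q₃).cos).add_const (cos (q₃ + q₄))).congr_deriv
    (by simp only [id, mul_one]; ring)

theorem hasDerivAt_zigzagPotential_snd :
    HasDerivAt (fun y ↦ zigzagPotential q₂ y q₄)
      (-(sin q₃ + sin (q₂ + q₃) + sin (q₃ + q₄))) q₃ :=
  (((((hasDerivAt_id q₃).cos.const_add (cos q₂)).add_const (cos q₄)).add
    ((hasDerivAt_id q₃).const_add q₂).cos).add ((hasDerivAt_id q₃).add_const q₄).cos).congr_deriv
    (by simp only [id, mul_one]; ring)

theorem hasDerivAt_zigzagPotential_thd :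
    HasDerivAt (fun z ↦ zigzagPotential q₂ q₃ z) (-(sin q₄ + sin (q₃ + q₄))) q₄ :=
  ((((hasDerivAt_id q₄).cos.const_add (cos q₂ + cos q₃)).add_const (cos (q₂ + q₃))).add
    ((hasDerivAt_id q₄).const_add q₃).cos).congr_deriv
    (by simp only [id, mul_one]; ring)

end Derivatives

namespace Real.Angle

theorem sin_add_sin_eq_zero_iff {θ ψ : Angle} : sin θ + sin ψ = 0 ↔ ψ = -θ ∨ ψ = θ - π := by
  rw [add_eq_zero_iff_neg_eq, ← sin_neg, sin_eq_iff_eq_or_add_eq_pi, sub_coe_pi_eq_add_coe_pi]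
  constructor <;> rintro (h | h)
  exacts [.inl h.symm, .inr (by rw [← h]; abel), .inl h.symm, .inr (by rw [h]; abel)]

theorem add_eq_neg_of_sin_add_sin_add_eq_zero {a b : Angle} (hb : b ≠ π)
    (h : sin a + sin (a + b) = 0) : a + b = -a :=
  (sin_add_sin_eq_zero_iff.1 h).resolve_right fun h ↦
    hb (by rw [← neg_coe_pi]; linear_combination (norm := abel) h)

def IsZigzagCritical (a b c : Angle) : Prop :=
  sin a + sin (a + b) = 0 ∧ sin b + sin (a + b) + sin (b + c) = 0 ∧ sin c + sin (b + c) = 0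

variable {a b c : Angle}

theorem isZigzagCritical_iff_of_eq_pi (hb : b = π) :
    IsZigzagCritical a b c ↔ c = a - π ∨ c = -a := by
  subst hb
  rw [IsZigzagCritical, add_comm (π : Angle) c, sin_add_pi, sin_add_pi, sin_coe_pi, or_comm,
    ← sin_add_sin_eq_zero_iff]
  constructor
  · rintro ⟨-, h, -⟩
    linear_combination -h
  · intro h
    exact ⟨by ring, by linear_combination -h, by ring⟩

theorem isZigzagCritical_iff_of_ne_pi (hb : b ≠ π) :
    IsZigzagCritical a b c ↔ b = 0 ∧ (a = 0 ∨ a = π) ∧ (c = 0 ∨ c = π) := by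
  constructor
  · rintro ⟨h₁, h₂, h₃⟩
    have hab : a + b = -a := add_eq_neg_of_sin_add_sin_add_eq_zero hb h₁
    have hcb : b + c = -c := by
      rw [add_comm b c] at h₃ ⊢
      exact add_eq_neg_of_sin_add_sin_add_eq_zero hb h₃
    have hba : b = -((2 : ℕ) • a) := by rw [two_nsmul]; linear_combination (norm := abel) hab
    have hca : (2 : ℕ) • c = (2 : ℕ) • a := by
      rw [two_nsmul, two_nsmul]; linear_combination (norm := abel) hcb - hab
    have hsin : -(2 * sin a * cos a) = sin a + sin c := by
      rw [hab, hcb, sin_neg, sin_neg, hba, sin_neg, sin_two_nsmul, nsmul_eq_mul] at h₂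
      linear_combination h₂
    have ha : sin a = 0 := by
      rcases two_nsmul_eq_iff.1 hca with hc | hc <;> rw [hc] at hsin
      · refine (mul_eq_zero.1 (by linear_combination -hsin / 2 : sin a * (cos a + 1) = 0)).elim
          id fun h ↦ ?_
        have : cos a = cos π := by rw [cos_coe_pi]; linear_combination h
        rcases cos_eq_iff_eq_or_eq_neg.1 this with rfl | rfl
        · exact sin_coe_pi
        · rw [sin_neg, sin_coe_pi, neg_zero]
      -- `cos a = 0` would give `2 • a = π`, hence `b = π`.
      · rw [sin_add_pi] at hsin
        refine (mul_eq_zero.1 (by linear_combination -hsin / 2 : sin a * cos a = 0)).resolve_right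
          fun h ↦ ?_
        rw [cos_eq_zero_iff, ← two_nsmul_eq_pi_iff] at h
        exact hb (by rw [hba, h, neg_coe_pi])
    have h2a : (2 : ℕ) • a = 0 := two_nsmul_eq_zero_iff.2 (sin_eq_zero_iff.1 ha)
    exact ⟨by rw [hba, h2a, neg_zero], sin_eq_zero_iff.1 ha,
      two_nsmul_eq_zero_iff.1 (hca.trans h2a)⟩
  · rintro ⟨rfl, ha, hc⟩
    rcases ha with rfl | rfl <;> rcases hc with rfl | rfl <;> simp [IsZigzagCritical]

theorem isZigzagCritical_iff :
    IsZigzagCritical a b c ↔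
      (a = 0 ∧ b = 0 ∧ c = 0) ∨ (a = 0 ∧ b = 0 ∧ c = π) ∨ (a = π ∧ b = 0 ∧ c = 0) ∨
        (a = π ∧ b = 0 ∧ c = π) ∨ (b = π ∧ c = a - π) ∨ (b = π ∧ c = -a) := by
  by_cases hb : b = π
  · rw [isZigzagCritical_iff_of_eq_pi hb]
    simp [hb, pi_ne_zero]
  · rw [isZigzagCritical_iff_of_ne_pi hb]
    simp only [hb, false_and, or_false]
    tauto

end Real.Angle

/-- The critical points of
`f(q₂,q₃,q₄) = cos q₂ + cos q₃ + cos q₄ + cos(q₂+q₃) + cos(q₃+q₄)` on `𝕋³`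
are exactly: the four isolated points `(0,0,0), (0,0,π), (π,0,0), (π,0,π)` and
the two one-parameter families `P₁(ϑ) = (ϑ, π, ϑ-π)`, `P₂(ϑ) = (ϑ, π, -ϑ)`. -/
theorem stmt3 (f : ℝ → ℝ → ℝ → ℝ)
    (hf : ∀ q₂ q₃ q₄, f q₂ q₃ q₄ =
      Real.cos q₂ + Real.cos q₃ + Real.cos q₄ + Real.cos (q₂ + q₃) +
        Real.cos (q₃ + q₄))
    (q₂ q₃ q₄ : ℝ) :
    (deriv (fun x => f x q₃ q₄) q₂ = 0 ∧
     deriv (fun y => f q₂ y q₄) q₃ = 0 ∧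
     deriv (fun z => f q₂ q₃ z) q₄ = 0) ↔
    ((AngleEq q₂ 0 ∧ AngleEq q₃ 0 ∧ AngleEq q₄ 0) ∨
     (AngleEq q₂ 0 ∧ AngleEq q₃ 0 ∧ AngleEq q₄ π) ∨
     (AngleEq q₂ π ∧ AngleEq q₃ 0 ∧ AngleEq q₄ 0) ∨
     (AngleEq q₂ π ∧ AngleEq q₃ 0 ∧ AngleEq q₄ π) ∨
     (AngleEq q₃ π ∧ AngleEq q₄ (q₂ - π)) ∨
     (AngleEq q₃ π ∧ AngleEq q₄ (-q₂))) := by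
  obtain rfl : f = zigzagPotential := funext₃ hf
  rw [(hasDerivAt_zigzagPotential_fst q₂ q₃ q₄).deriv,
    (hasDerivAt_zigzagPotential_snd q₂ q₃ q₄).deriv,
    (hasDerivAt_zigzagPotential_thd q₂ q₃ q₄).deriv, neg_eq_zero, neg_eq_zero, neg_eq_zero]
  simp only [angleEq_iff_coe_eq, ← Angle.sin_coe, Angle.coe_add, Angle.coe_zero, Angle.coe_sub,
    Angle.coe_neg]
  exact Angle.isZigzagCritical_iff
end

section
/- Let f(q₂,q₃,q₄) = cos(q₂) + cos(q₃) + cos(q₄) + cos(q₂+q₃) + cos(q₃+q₄). The Hessian of f at the critical points (0,0,0), (0,0,π), (π,0,0) is nonsingular, while the Hessian of f at the critical point (π,0,π) is singular. -/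
/-!
Each summand of `F` is the cosine of a linear form `⟪a, q⟫`, so the Hessian of `F` is
`-∑ₖ cos ⟪aₖ, q⟫ • aₖ aₖᵀ`, a tridiagonal matrix in the five cosines. Its determinant is
`-8`, `4`, `4` at the first three points and `0` at `(π, 0, π)`.
-/

open Real

/-- Partial derivative of `F : ℝ³ → ℝ` in the `i`-th coordinate at `q`. -/
noncomputable def pderiv3 (F : (Fin 3 → ℝ) → ℝ) (i : Fin 3) (q : Fin 3 → ℝ) : ℝ :=
  deriv (fun t => F (Function.update q i t)) (q i)

/-- Hessian matrix of `F : ℝ³ → ℝ` at `q`. -/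
noncomputable def hess3 (F : (Fin 3 → ℝ) → ℝ) (q : Fin 3 → ℝ) :
    Matrix (Fin 3) (Fin 3) ℝ :=
  Matrix.of fun i j => pderiv3 (pderiv3 F j) i q

open Matrix

theorem Matrix.dotProduct_update {m α : Type*} [Fintype m] [DecidableEq m] [CommRing α]
    (v w : m → α) (i : m) (x : α) :
    v ⬝ᵥ Function.update w i x = v ⬝ᵥ w + v i * (x - w i) := by
  have h : Function.update w i x = w + Pi.single i (x - w i) := by
    ext j
    by_cases hj : j = i <;> simp [hj]
  rw [h, dotProduct_add, dotProduct_single]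

theorem hasDerivAt_dotProduct_update {n : Type*} [Fintype n] [DecidableEq n]
    (a q : n → ℝ) (i : n) (t : ℝ) :
    HasDerivAt (fun s => a ⬝ᵥ Function.update q i s) (a i) t := by
  simp only [dotProduct_update]
  simpa using ((hasDerivAt_id t).sub_const (q i)).const_mul (a i) |>.const_add (a ⬝ᵥ q)

theorem pderiv3_sum_comp_dotProduct {ι : Type*} [Fintype ι] (g g' : ι → ℝ → ℝ)
    (hg : ∀ k x, HasDerivAt (g k) (g' k x) x) (a : ι → Fin 3 → ℝ) (i : Fin 3) :
    pderiv3 (fun q => ∑ k, g k (a k ⬝ᵥ q)) i = fun q => ∑ k, a k i * g' k (a k ⬝ᵥ q) := by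
  funext q
  have h := HasDerivAt.fun_sum (u := Finset.univ) fun k _ =>
    (hg k _).comp (q i) (hasDerivAt_dotProduct_update (a k) q i (q i))
  simp only [Function.update_eq_self, mul_comm (g' _ _)] at h
  exact h.deriv

theorem hess3_sum_cos_dotProduct {ι : Type*} [Fintype ι] (a : ι → Fin 3 → ℝ) (q : Fin 3 → ℝ) :
    hess3 (fun q => ∑ k, cos (a k ⬝ᵥ q)) q =
      Matrix.of fun i j => -∑ k, a k i * a k j * cos (a k ⬝ᵥ q) := by
  ext i j
  have hcos := pderiv3_sum_comp_dotProduct (fun _ => cos) (fun _ x => -sin x)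
    (fun _ => hasDerivAt_cos) a j
  have hsin := pderiv3_sum_comp_dotProduct (fun k x => a k j * -sin x)
    (fun k x => a k j * -cos x) (fun k x => (hasDerivAt_sin x).neg.const_mul (a k j)) a i
  simp only [hess3, of_apply, hcos, hsin]
  simp only [Finset.sum_neg_distrib, mul_neg, mul_assoc]

def zigzagModes : Fin 5 → Fin 3 → ℝ :=
  ![![1, 0, 0], ![0, 1, 0], ![0, 0, 1], ![1, 1, 0], ![0, 1, 1]]

theorem hess3_zigzag (F : (Fin 3 → ℝ) → ℝ)
    (hF : ∀ q : Fin 3 → ℝ, F q =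
      Real.cos (q 0) + Real.cos (q 1) + Real.cos (q 2) +
        Real.cos (q 0 + q 1) + Real.cos (q 1 + q 2)) (q : Fin 3 → ℝ) :
    hess3 F q = -!![cos (q 0) + cos (q 0 + q 1), cos (q 0 + q 1), 0;
      cos (q 0 + q 1), cos (q 1) + cos (q 0 + q 1) + cos (q 1 + q 2), cos (q 1 + q 2);
      0, cos (q 1 + q 2), cos (q 2) + cos (q 1 + q 2)] := by
  have hsum : F = fun q => ∑ k, cos (zigzagModes k ⬝ᵥ q) := by
    funext q
    simp [hF, Fin.sum_univ_five, dotProduct, Fin.sum_univ_three, zigzagModes]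
  rw [hsum, hess3_sum_cos_dotProduct]
  ext i j
  fin_cases i <;> fin_cases j <;>
    simp [Fin.sum_univ_five, dotProduct, Fin.sum_univ_three, zigzagModes]

/-- For `f(q₂,q₃,q₄) = cos q₂ + cos q₃ + cos q₄ + cos(q₂+q₃) + cos(q₃+q₄)`,
the Hessian is nonsingular at the critical points `(0,0,0)`, `(0,0,π)`, `(π,0,0)`
and singular at the critical point `(π,0,π)`. -/
theorem stmt4 (F : (Fin 3 → ℝ) → ℝ)
    (hF : ∀ q : Fin 3 → ℝ, F q =
      Real.cos (q 0) + Real.cos (q 1) + Real.cos (q 2) +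
        Real.cos (q 0 + q 1) + Real.cos (q 1 + q 2)) :
    (hess3 F ![0, 0, 0]).det ≠ 0 ∧
    (hess3 F ![0, 0, π]).det ≠ 0 ∧
    (hess3 F ![π, 0, 0]).det ≠ 0 ∧
    (hess3 F ![π, 0, π]).det = 0 := by
  simp only [hess3_zigzag F hF, det_neg, det_fin_three]
  norm_num [cons_val_two, tail_cons, head_cons]
end

section
/- Let f(q₂,q₃,q₄) = cos(q₂) + cos(q₃) + cos(q₄) + cos(q₂+q₃) + cos(q₃+q₄). Along the curve c(t) = (π+t, -2t, π+t), one has f(c(t)) - f(π,0,π) = O(t⁴) as t → 0; more precisely the first, second and third derivatives of t ↦ f(c(t)) vanish at t = 0 while the fourth derivative is nonzero, so (π,0,π) is a degenerate minimizer of f along this direction with quartic growth. -/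
open Real

/-!
Along the curve, `f(c(t)) = cos 2t - 4 cos t = -3 + 8 sin⁴(t/2)`, which gives the quartic bound.
The `n`-th derivative of `cos 2t - 4 cos t` at `0` is `(2ⁿ - 4) cos⁽ⁿ⁾(0)`: it vanishes
for odd `n` because `cos` is even, for `n = 2` because `2² = 4`, and equals `12` for `n = 4`.
-/

theorem iteratedDeriv_comp_mul_sub_mul_zero {f : ℝ → ℝ} {n : ℕ} (hf : ContDiff ℝ n f)
    (c a : ℝ) :
    iteratedDeriv n (fun t => f (c * t) - a * f t) 0 = (c ^ n - a) * iteratedDeriv n f 0 := by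
  have hfc : ContDiff ℝ n fun t => f (c * t) := hf.comp (contDiff_const.mul contDiff_id)
  rw [iteratedDeriv_fun_sub hfc.contDiffAt (contDiff_const.mul hf).contDiffAt,
    iteratedDeriv_const_mul_field, iteratedDeriv_comp_const_mul hf, sub_mul]
  simp only [mul_zero]

theorem cos_two_mul_sub_four_mul_cos_add_three (t : ℝ) :
    cos (2 * t) - 4 * cos t + 3 = 8 * sin (t / 2) ^ 4 := by
  have hcos : cos t = 1 - 2 * sin (t / 2) ^ 2 := by
    rw [← cos_two_mul_eq_one_sub, mul_div_cancel₀ t two_ne_zero]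
  rw [cos_two_mul, hcos]
  ring

theorem isBigO_cos_two_mul_sub_four_mul_cos_add_three (l : Filter ℝ) :
    (fun t => cos (2 * t) - 4 * cos t + 3) =O[l] fun t => t ^ 4 := by
  refine Asymptotics.IsBigO.of_bound (1 / 2) (Filter.Eventually.of_forall fun t => ?_)
  rw [norm_pow, Real.norm_eq_abs, Real.norm_eq_abs, cos_two_mul_sub_four_mul_cos_add_three,
    abs_mul, abs_pow, abs_of_pos (by norm_num : (0 : ℝ) < 8)]
  calc 8 * |sin (t / 2)| ^ 4 ≤ 8 * |t / 2| ^ 4 := by gcongr 8 * ?_ ^ 4; exact abs_sin_le_abs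
    _ = 1 / 2 * |t| ^ 4 := by rw [abs_div, abs_two]; ring

theorem cos_add_cos_along_zigzag_curve (t : ℝ) :
    cos (π + t) + cos (-2 * t) + cos (π + t) + cos (π + t + -2 * t) + cos (-2 * t + (π + t)) =
      cos (2 * t) - 4 * cos t := by
  rw [show -2 * t + (π + t) = π - t by ring, show π + t + -2 * t = π - t by ring, add_comm π t,
    neg_mul, cos_neg, cos_pi_sub, cos_add_pi]
  ring

/-- For `f(q₂,q₃,q₄) = cos q₂ + cos q₃ + cos q₄ + cos(q₂+q₃) + cos(q₃+q₄)` and the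
curve `c(t) = (π+t, -2t, π+t)`, the function `φ(t) = f(c(t))` satisfies
`φ'(0) = φ''(0) = φ'''(0) = 0` and `φ''''(0) ≠ 0`, and
`f(c(t)) - f(π,0,π) = O(t⁴)` as `t → 0`: `(π,0,π)` is a degenerate minimizer of
`f` along this direction with quartic growth. -/
theorem stmt5 (f : ℝ → ℝ → ℝ → ℝ)
    (hf : ∀ q₂ q₃ q₄, f q₂ q₃ q₄ =
      Real.cos q₂ + Real.cos q₃ + Real.cos q₄ + Real.cos (q₂ + q₃) +
        Real.cos (q₃ + q₄))
    (φ : ℝ → ℝ) (hφ : ∀ t, φ t = f (π + t) (-2 * t) (π + t)) :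
    iteratedDeriv 1 φ 0 = 0 ∧ iteratedDeriv 2 φ 0 = 0 ∧
    iteratedDeriv 3 φ 0 = 0 ∧ iteratedDeriv 4 φ 0 ≠ 0 ∧
    (fun t : ℝ => φ t - f π 0 π) =O[nhds 0] (fun t : ℝ => t ^ 4) := by
  have hφ' : φ = fun t => cos (2 * t) - 4 * cos t :=
    funext fun t => by rw [hφ, hf, cos_add_cos_along_zigzag_curve]
  have hderiv (n : ℕ) : iteratedDeriv n φ 0 = (2 ^ n - 4) * iteratedDeriv n cos 0 := by
    rw [hφ']
    exact iteratedDeriv_comp_mul_sub_mul_zero contDiff_cos 2 4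
  have hcrit : f π 0 π = -3 := by
    rw [hf]
    norm_num
  refine ⟨by simp [hderiv], by norm_num [hderiv], by simp [hderiv], by norm_num [hderiv], ?_⟩
  simpa only [hφ', hcrit, sub_neg_eq_add] using isBigO_cos_two_mul_sub_four_mul_cos_add_three _
end

section
/- Consider F(q,ε) = F₀(q) + εF₁(q) with F₀, F₁: 𝕋^{m-1} → ℝ^{m-1} smooth, and suppose P: 𝕋 → 𝕋^{m-1} is a smooth curve with F₀(P(ϑ)) = 0 for all ϑ and ∂_ϑP(ϑ) ∈ ker DF₀(P(ϑ)). If ϑ* ∈ 𝕋 is such that there exists a continuous branch ϑ ↦ q(ϑ,ε) of solutions of F(q,ε)=0 with q(ϑ*,0) = P(ϑ*) and q differentiable in ε at ε=0 with ∂_ε q(ϑ*,0) orthogonal-decomposable against DF₀, and if additionally F₀ and F₁ are gradients of functions f₀, f₁, then necessarily ⟨F₁(P(ϑ*)), ∂_ϑP(ϑ*)⟩ = 0. That is: vanishing of the projection of the first-order term onto the kernel direction is a necessary condition for continuation of a point of a degenerate family of zeros. -/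
open Real

section Aux

variable {E : Type*} [NormedAddCommGroup E] [InnerProductSpace ℝ E] [CompleteSpace E]

lemma gradient_contDiff' (f : E → ℝ) (hf : ContDiff ℝ (⊤ : ℕ∞) f) :
    ContDiff ℝ (⊤ : ℕ∞) (gradient f) := by
  have : gradient f = ⇑(InnerProductSpace.toDual ℝ E).symm.toContinuousLinearEquiv ∘ fderiv ℝ f := rfl
  rw [this]
  exact ((InnerProductSpace.toDual ℝ E).symm.toContinuousLinearEquiv.contDiff).comp
    (hf.fderiv_right (by simp))

lemma gradient_fderiv_symm' (f : E → ℝ) (hf : ContDiff ℝ (⊤ : ℕ∞) f) (x v w : E) :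
    inner (𝕜 := ℝ) (fderiv ℝ (gradient f) x v) w
      = inner (𝕜 := ℝ) (fderiv ℝ (gradient f) x w) v := by
  have hdg : DifferentiableAt ℝ (gradient f) x :=
    (gradient_contDiff' f hf).differentiable (by simp) x
  have hdf : DifferentiableAt ℝ (fderiv ℝ f) x :=
    ((hf.fderiv_right (m := (⊤ : ℕ∞)) (by simp)).differentiable (by simp)) x
  have key : ∀ u z : E, inner (𝕜 := ℝ) (fderiv ℝ (gradient f) x u) z
      = fderiv ℝ (fderiv ℝ f) x u z := by
    intro u z
    have h1 : (innerSL ℝ z : E →L[ℝ] ℝ) ∘ gradient f = fun y => fderiv ℝ f y z := by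
      funext y
      simp only [Function.comp_apply, innerSL_apply_apply]
      rw [real_inner_comm]
      exact InnerProductSpace.toDual_symm_apply
    have h2 : fderiv ℝ ((innerSL ℝ z : E →L[ℝ] ℝ) ∘ gradient f) x
        = (innerSL ℝ z : E →L[ℝ] ℝ).comp (fderiv ℝ (gradient f) x) :=
      ((innerSL ℝ z).hasFDerivAt.comp x hdg.hasFDerivAt).fderiv
    have h3 : fderiv ℝ (fun y => fderiv ℝ f y z) x
        = (ContinuousLinearMap.apply ℝ ℝ z).comp (fderiv ℝ (fderiv ℝ f) x) :=
      ((ContinuousLinearMap.apply ℝ ℝ z).hasFDerivAt.comp x hdf.hasFDerivAt).fderiv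
    have := h2.symm.trans ((congrArg (fderiv ℝ · x) h1).trans h3)
    have h4 := congrArg (fun L : E →L[ℝ] ℝ => L u) this
    simpa [real_inner_comm] using h4
  have hsym : IsSymmSndFDerivAt ℝ f x := hf.contDiffAt.isSymmSndFDerivAt (by rw [minSmoothness_of_isRCLikeNormedField]; exact WithTop.coe_le_coe.mpr le_top)
  rw [key, key, hsym v w]

end Aux

/-- Necessary condition for continuation of a point of a degenerate family of
zeros: if `F₀ = ∇f₀`, `F₁ = ∇f₁`, `P(ϑ)` is a smooth family of zeros of `F₀`
whose tangent `∂_ϑP` lies in the kernel of `DF₀` along the family, and there is a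
branch `ε ↦ q(ε)` of zeros of `F(·,ε) = F₀ + εF₁` with `q(0) = P(ϑ*)`,
differentiable in `ε` at `ε = 0`, then the projection of the first-order term on
the kernel direction vanishes: `⟨F₁(P(ϑ*)), ∂_ϑP(ϑ*)⟩ = 0`. -/
theorem stmt15 {n : ℕ}
    (f₀ f₁ : EuclideanSpace ℝ (Fin n) → ℝ)
    (hf₀ : ContDiff ℝ (⊤ : ℕ∞) f₀) (hf₁ : ContDiff ℝ (⊤ : ℕ∞) f₁)
    (F₀ F₁ : EuclideanSpace ℝ (Fin n) → EuclideanSpace ℝ (Fin n))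
    (hF₀ : ∀ x, F₀ x = gradient f₀ x) (hF₁ : ∀ x, F₁ x = gradient f₁ x)
    (P : ℝ → EuclideanSpace ℝ (Fin n)) (hP : Differentiable ℝ P)
    (hPzero : ∀ ϑ, F₀ (P ϑ) = 0)
    (ϑstar : ℝ)
    (hker : ∀ ϑ, fderiv ℝ F₀ (P ϑ) (deriv P ϑ) = 0)
    (q : ℝ → EuclideanSpace ℝ (Fin n))
    (hq0 : q 0 = P ϑstar)
    (hqd : DifferentiableAt ℝ q 0)
    (hsol : ∀ᶠ ε in nhds (0 : ℝ), F₀ (q ε) + ε • F₁ (q ε) = 0) :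
    inner (𝕜 := ℝ) (F₁ (P ϑstar)) (deriv P ϑstar) = 0 := by
  have hF₀' : F₀ = gradient f₀ := funext hF₀
  have hF₁' : F₁ = gradient f₁ := funext hF₁
  subst hF₀' hF₁'
  have hd₀ : Differentiable ℝ (gradient f₀) := (gradient_contDiff' f₀ hf₀).differentiable (by simp)
  have hd₁ : Differentiable ℝ (gradient f₁) := (gradient_contDiff' f₁ hf₁).differentiable (by simp)
  have hq : HasDerivAt q (deriv q 0) 0 := hqd.hasDerivAt
  have h1 : HasDerivAt (fun ε => gradient f₀ (q ε)) (fderiv ℝ (gradient f₀) (q 0) (deriv q 0)) 0 :=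
    ((hd₀ (q 0)).hasFDerivAt).comp_hasDerivAt 0 hq
  have h2 : HasDerivAt (fun ε => gradient f₁ (q ε)) (fderiv ℝ (gradient f₁) (q 0) (deriv q 0)) 0 :=
    ((hd₁ (q 0)).hasFDerivAt).comp_hasDerivAt 0 hq
  have h3 : HasDerivAt (fun ε : ℝ => ε • gradient f₁ (q ε))
      ((0 : ℝ) • fderiv ℝ (gradient f₁) (q 0) (deriv q 0) + (1 : ℝ) • gradient f₁ (q 0)) 0 :=
    (hasDerivAt_id (0 : ℝ)).smul h2
  have hsum := h1.add h3
  have hzero : HasDerivAt (fun ε : ℝ => gradient f₀ (q ε) + ε • gradient f₁ (q ε)) 0 0 :=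
    (hasDerivAt_const (0 : ℝ) (0 : EuclideanSpace ℝ (Fin n))).congr_of_eventuallyEq hsol
  have hkey : fderiv ℝ (gradient f₀) (P ϑstar) (deriv q 0) + gradient f₁ (P ϑstar) = 0 := by
    have h5 := hsum.unique hzero
    rw [hq0] at h5
    simpa using h5
  have hinner : inner (𝕜 := ℝ)
      (fderiv ℝ (gradient f₀) (P ϑstar) (deriv q 0) + gradient f₁ (P ϑstar))
      (deriv P ϑstar) = (0 : ℝ) := by rw [hkey]; simp
  rw [inner_add_left] at hinner
  have hsymm : inner (𝕜 := ℝ) (fderiv ℝ (gradient f₀) (P ϑstar) (deriv q 0))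
      (deriv P ϑstar) = 0 := by
    rw [gradient_fderiv_symm' f₀ hf₀ (P ϑstar) (deriv q 0) (deriv P ϑstar), hker ϑstar]
    simp
  rw [hsymm, zero_add] at hinner
  exact hinner
end
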